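/- arXiv:2307.08078 — 6 statements merged into one kernel-verified Lean document; each statement's English description precedes it below -/
import Mathlib

section
/- Let n ≥ 1, d_i ≥ 0 (not all zero), 0 < α_i < 1, and define η_{j,k} := Σ_{i=1}^n (d_i/(α_i Δt)) b^{(α_i)}_{j,k} with b^{(α_i)}_{j,k} as above for each α_i, and ζ_{j,k} := η_{j,k}/η_{k,k}. Then 0 < ζ_{j,k} ≤ 1, ζ_{k,k} = 1, ζ_{j,k+1} < ζ_{j,k} for j ≤ k, and ζ_{j-1,k} < ζ_{j,k} for 2 ≤ j ≤ k. -/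
open Real

theorem zeta_properties (n : ℕ) (Δt : ℝ) (hΔt : 0 < Δt)
    (α d : Fin n → ℝ) (hα : ∀ i, 0 < α i ∧ α i < 1)
    (hd : ∀ i, 0 ≤ d i) (hdsum : 0 < ∑ i, d i)
    (η ζ : ℕ → ℕ → ℝ)
    (hη : ∀ j k : ℕ, η j k = ∑ i, d i / (α i * Δt) *
      (Real.exp (-(α i) * ((k : ℝ) * Δt - (j : ℝ) * Δt) / (1 - α i)) -
        Real.exp (-(α i) * ((k : ℝ) * Δt - ((j : ℝ) - 1) * Δt) / (1 - α i))))
    (hζ : ∀ j k : ℕ, ζ j k = η j k / η k k) :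
    (∀ j k : ℕ, 1 ≤ j → j ≤ k → 0 < ζ j k ∧ ζ j k ≤ 1) ∧
    (∀ k : ℕ, 1 ≤ k → ζ k k = 1) ∧
    (∀ j k : ℕ, 1 ≤ j → j ≤ k → ζ j (k + 1) < ζ j k) ∧
    (∀ j k : ℕ, 2 ≤ j → j ≤ k → ζ (j - 1) k < ζ j k) := by
  obtain ⟨i₀, hi₀⟩ : ∃ i, 0 < d i := by
    by_contra h
    push_neg at h
    have : ∑ i, d i ≤ 0 := Finset.sum_nonpos (fun i _ => h i)
    linarith
  set F : ℝ → ℝ := fun s => ∑ i, d i / (α i * Δt) *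
      ((1 - Real.exp (-(α i) * Δt / (1 - α i))) *
        Real.exp (-(α i) * (s * Δt) / (1 - α i))) with hF
  have hηF : ∀ j k : ℕ, η j k = F ((k : ℝ) - j) := by
    intro j k
    rw [hη, hF]
    apply Finset.sum_congr rfl
    intro i _
    have h1 : (1 : ℝ) - α i ≠ 0 := by have := (hα i).2; linarith
    have e1 : -(α i) * ((k : ℝ) * Δt - (j : ℝ) * Δt) / (1 - α i)
        = -(α i) * (((k : ℝ) - j) * Δt) / (1 - α i) := by ring
    have e2 : Real.exp (-(α i) * ((k : ℝ) * Δt - ((j : ℝ) - 1) * Δt) / (1 - α i))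
        = Real.exp (-(α i) * Δt / (1 - α i)) *
          Real.exp (-(α i) * (((k : ℝ) - j) * Δt) / (1 - α i)) := by
      rw [← Real.exp_add]
      congr 1
      field_simp
      ring
    rw [e1, e2]
    ring
  have hKnn : ∀ i, 0 ≤ d i / (α i * Δt) * (1 - Real.exp (-(α i) * Δt / (1 - α i))) := by
    intro i
    have h1 : 0 < α i := (hα i).1
    have h2 : (0:ℝ) < 1 - α i := by have := (hα i).2; linarith
    have hneg : -(α i) * Δt / (1 - α i) < 0 :=
      div_neg_of_neg_of_pos (by nlinarith) h2
    have he : Real.exp (-(α i) * Δt / (1 - α i)) < 1 := Real.exp_lt_one_iff.mpr hneg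
    have h3 : 0 ≤ d i / (α i * Δt) := div_nonneg (hd i) (by positivity)
    nlinarith
  have hKpos : 0 < d i₀ / (α i₀ * Δt) * (1 - Real.exp (-(α i₀) * Δt / (1 - α i₀))) := by
    have h1 : 0 < α i₀ := (hα i₀).1
    have h2 : (0:ℝ) < 1 - α i₀ := by have := (hα i₀).2; linarith
    have hneg : -(α i₀) * Δt / (1 - α i₀) < 0 :=
      div_neg_of_neg_of_pos (by nlinarith) h2
    have he : Real.exp (-(α i₀) * Δt / (1 - α i₀)) < 1 := Real.exp_lt_one_iff.mpr hneg
    have h3 : 0 < d i₀ / (α i₀ * Δt) := by positivity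
    nlinarith
  have hexp_lt : ∀ (i : Fin n) (s t : ℝ), 0 < α i → α i < 1 → s < t →
      Real.exp (-(α i) * (t * Δt) / (1 - α i)) < Real.exp (-(α i) * (s * Δt) / (1 - α i)) := by
    intro i s t h1 h1' hst
    have h2 : (0:ℝ) < 1 - α i := by linarith
    apply Real.exp_lt_exp.mpr
    rw [div_lt_div_iff₀ h2 h2]
    nlinarith [mul_pos (mul_pos (mul_pos h1 hΔt) (sub_pos.mpr hst)) h2]
  have Fpos : ∀ s : ℝ, 0 < F s := by
    intro s
    rw [hF]
    apply Finset.sum_pos'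
    · intro i _
      nlinarith [hKnn i, Real.exp_pos (-(α i) * (s * Δt) / (1 - α i))]
    · refine ⟨i₀, Finset.mem_univ _, ?_⟩
      nlinarith [hKpos, Real.exp_pos (-(α i₀) * (s * Δt) / (1 - α i₀))]
  have Fstrict : ∀ s t : ℝ, s < t → F t < F s := by
    intro s t hst
    rw [hF]
    apply Finset.sum_lt_sum
    · intro i _
      have := (hexp_lt i s t (hα i).1 (hα i).2 hst).le
      nlinarith [hKnn i]
    · refine ⟨i₀, Finset.mem_univ _, ?_⟩
      have := hexp_lt i₀ s t (hα i₀).1 (hα i₀).2 hst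
      nlinarith [hKpos]
  have Fle : ∀ s t : ℝ, s ≤ t → F t ≤ F s := by
    intro s t hst
    rcases eq_or_lt_of_le hst with h | h
    · rw [h]
    · exact (Fstrict s t h).le
  have hζF : ∀ j k : ℕ, ζ j k = F ((k : ℝ) - j) / F 0 := by
    intro j k
    rw [hζ, hηF, hηF k k, sub_self]
  have hdivlt : ∀ x y : ℝ, F x < F y → F x / F 0 < F y / F 0 := by
    intro x y h
    have h0 := Fpos 0
    gcongr
  refine ⟨?_, ?_, ?_, ?_⟩
  · intro j k hj hjk
    rw [hζF]
    refine ⟨div_pos (Fpos _) (Fpos _), ?_⟩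
    rw [div_le_one (Fpos 0)]
    apply Fle
    have : (j:ℝ) ≤ k := by exact_mod_cast hjk
    linarith
  · intro k hk
    rw [hζF, sub_self]
    exact div_self (Fpos 0).ne'
  · intro j k hj hjk
    rw [hζF, hζF]
    apply hdivlt
    apply Fstrict
    push_cast
    linarith
  · intro j k hj hjk
    rw [hζF, hζF]
    have hc : ((j - 1 : ℕ) : ℝ) = (j : ℝ) - 1 := by
      have h1 : (1:ℕ) ≤ j := by omega
      push_cast [Nat.cast_sub h1]
      ring
    rw [hc]
    apply hdivlt
    apply Fstrict
    linarith
end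

section
/- With 0 < α_1 ≤ ⋯ ≤ α_n < 1, d_i ≥ 0, Σ d_i > 0, and kΔt ≤ T, the ratio η_{k,k}/η_{1,k} satisfies η_{k,k}/η_{1,k} ≤ exp(α_n(k-1)Δt/(1-α_n)) ≤ exp(α_n T/(1-α_n)). -/
open Real

theorem eta_ratio_bound (n : ℕ) (Δt T : ℝ) (hΔt : 0 < Δt)
    (α d : Fin (n + 1) → ℝ)
    (hα : ∀ i, 0 < α i ∧ α i < 1) (hmono : Monotone α)
    (hd : ∀ i, 0 ≤ d i) (hdsum : 0 < ∑ i, d i)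
    (η : ℕ → ℕ → ℝ)
    (hη : ∀ j k : ℕ, η j k = ∑ i, d i / (α i * Δt) *
      (Real.exp (-(α i) * ((k : ℝ) * Δt - (j : ℝ) * Δt) / (1 - α i)) -
        Real.exp (-(α i) * ((k : ℝ) * Δt - ((j : ℝ) - 1) * Δt) / (1 - α i))))
    (k : ℕ) (hk : 1 ≤ k) (hkT : (k : ℝ) * Δt ≤ T) :
    η k k / η 1 k ≤ Real.exp (α (Fin.last n) * ((k : ℝ) - 1) * Δt / (1 - α (Fin.last n))) ∧
    Real.exp (α (Fin.last n) * ((k : ℝ) - 1) * Δt / (1 - α (Fin.last n))) ≤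
      Real.exp (α (Fin.last n) * T / (1 - α (Fin.last n))) := by
  obtain ⟨hβ0, hβ1⟩ := hα (Fin.last n)
  set β := α (Fin.last n) with hβdef
  set C := Real.exp (β * ((k : ℝ) - 1) * Δt / (1 - β)) with hCdef
  have hk1 : (1:ℝ) ≤ (k:ℝ) := by exact_mod_cast hk
  have hkΔ : (0:ℝ) ≤ ((k:ℝ) - 1) * Δt := by nlinarith
  -- pointwise facts for each i
  have hterm : ∀ i : Fin (n+1),
      0 ≤ d i / (α i * Δt) *
        (Real.exp (-(α i) * ((k : ℝ) * Δt - ((1:ℕ) : ℝ) * Δt) / (1 - α i)) -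
          Real.exp (-(α i) * ((k : ℝ) * Δt - (((1:ℕ) : ℝ) - 1) * Δt) / (1 - α i))) ∧
      (0 < d i → 0 < d i / (α i * Δt) *
        (Real.exp (-(α i) * ((k : ℝ) * Δt - ((1:ℕ) : ℝ) * Δt) / (1 - α i)) -
          Real.exp (-(α i) * ((k : ℝ) * Δt - (((1:ℕ) : ℝ) - 1) * Δt) / (1 - α i)))) ∧
      d i / (α i * Δt) *
        (Real.exp (-(α i) * ((k : ℝ) * Δt - (k : ℝ) * Δt) / (1 - α i)) -
          Real.exp (-(α i) * ((k : ℝ) * Δt - ((k : ℝ) - 1) * Δt) / (1 - α i))) ≤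
      C * (d i / (α i * Δt) *
        (Real.exp (-(α i) * ((k : ℝ) * Δt - ((1:ℕ) : ℝ) * Δt) / (1 - α i)) -
          Real.exp (-(α i) * ((k : ℝ) * Δt - (((1:ℕ) : ℝ) - 1) * Δt) / (1 - α i)))) := by
    intro i
    obtain ⟨ha0, ha1⟩ := hα i
    set a := α i with hadef
    have hab : a ≤ β := hmono (Fin.le_last i)
    have hc : 0 ≤ d i / (a * Δt) := div_nonneg (hd i) (by positivity)
    set E := Real.exp (-(a * Δt / (1 - a))) with hEdef
    set F := Real.exp (-(a * (((k:ℝ) - 1) * Δt) / (1 - a))) with hFdef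
    have e1 : -a * ((k : ℝ) * Δt - (k : ℝ) * Δt) / (1 - a) = 0 := by ring
    have e2 : -a * ((k : ℝ) * Δt - ((k : ℝ) - 1) * Δt) / (1 - a) = -(a * Δt / (1 - a)) := by
      ring
    have e3 : -a * ((k : ℝ) * Δt - ((1:ℕ) : ℝ) * Δt) / (1 - a) =
        -(a * (((k:ℝ) - 1) * Δt) / (1 - a)) := by push_cast; ring
    have e4 : -a * ((k : ℝ) * Δt - (((1:ℕ) : ℝ) - 1) * Δt) / (1 - a) =
        -(a * (((k:ℝ) - 1) * Δt) / (1 - a)) + -(a * Δt / (1 - a)) := by push_cast; ring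
    rw [e1, e2, e3, e4, Real.exp_add, Real.exp_zero, ← hEdef, ← hFdef]
    have hE1 : E < 1 := by
      rw [hEdef, Real.exp_lt_one_iff]
      have : 0 < a * Δt / (1 - a) := div_pos (by positivity) (by linarith)
      linarith
    have hF0 : 0 < F := Real.exp_pos _
    have hfrac : a / (1 - a) ≤ β / (1 - β) := by
      rw [div_le_div_iff₀ (by linarith) (by linarith)]
      nlinarith
    have hkey : a * (((k:ℝ) - 1) * Δt) / (1 - a) ≤ β * ((k:ℝ) - 1) * Δt / (1 - β) := by
      calc a * (((k:ℝ) - 1) * Δt) / (1 - a) = a / (1 - a) * (((k:ℝ) - 1) * Δt) := by ring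
        _ ≤ β / (1 - β) * (((k:ℝ) - 1) * Δt) := mul_le_mul_of_nonneg_right hfrac hkΔ
        _ = β * ((k:ℝ) - 1) * Δt / (1 - β) := by ring
    have hCF : 1 ≤ C * F := by
      rw [hCdef, hFdef, ← Real.exp_add]
      calc (1:ℝ) = Real.exp 0 := Real.exp_zero.symm
        _ ≤ _ := Real.exp_le_exp.mpr (by linarith)
    refine ⟨mul_nonneg hc (by nlinarith), fun hdpos => ?_, ?_⟩
    · have hcpos : 0 < d i / (a * Δt) := div_pos hdpos (by positivity)
      exact mul_pos hcpos (by nlinarith)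
    · nlinarith [mul_nonneg (sub_nonneg.2 hCF) (mul_nonneg hc (sub_nonneg.2 hE1.le))]
  have hηpos : 0 < η 1 k := by
    rw [hη 1 k]
    obtain ⟨i0, hi0⟩ : ∃ i, 0 < d i := by
      by_contra h
      push_neg at h
      have : ∑ i, d i = 0 := Finset.sum_eq_zero fun i _ => le_antisymm (h i) (hd i)
      linarith
    exact Finset.sum_pos' (fun i _ => (hterm i).1)
      ⟨i0, Finset.mem_univ i0, (hterm i0).2.1 hi0⟩
  constructor
  · rw [div_le_iff₀ hηpos, hη k k, hη 1 k, Finset.mul_sum]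
    exact Finset.sum_le_sum fun i _ => (hterm i).2.2
  · apply Real.exp_le_exp.mpr
    rw [div_le_div_iff₀ (by linarith) (by linarith)]
    nlinarith [mul_nonneg hβ0.le (sub_nonneg.2 hkT), mul_nonneg hβ0.le hΔt.le]
end

section
/- Let h ∈ C²[0,T], 0 < α < 1, and let Π₁h denote the piecewise linear interpolant of h at nodes t_j = jΔt. Then for the first step, | (1/(1-α)) ∫_0^{t_1} (h - Π₁h)'(s) exp(-α(t_1 - s)/(1-α)) ds | ≤ (α/(8(1-α)²)) · max_{t∈[0,T]} |h''(t)| · (Δt)³. -/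
/-!
Integrating by parts moves the derivative onto the exponential weight; the boundary terms vanish
because the interpolation error `e = h - Π₁h` vanishes at both nodes, leaving
`-(α / (1 - α)) ∫ e(s) exp(-α (t₁ - s) / (1 - α)) ds` with a weight in `(0, 1]`. The classical
estimate `|e| ≤ M Δt² / 8`, where `M` bounds `|h''|`, follows from the convexity of
`±e - (M / 2) s (Δt - s)`, which vanishes at both nodes.
-/

open Real Set intervalIntegral

noncomputable def linearInterpolant (f : ℝ → ℝ) (a b x : ℝ) : ℝ :=
  f a + (f b - f a) / (b - a) * (x - a)

lemma nonpos_of_hasDerivAt2_nonneg_of_mem_Icc {g g' g'' : ℝ → ℝ} {a b x : ℝ}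
    (hg : ∀ y, HasDerivAt g (g' y) y) (hg' : ∀ y, HasDerivAt g' (g'' y) y)
    (hg'' : ∀ y ∈ Ioo a b, 0 ≤ g'' y) (ha : g a ≤ 0) (hb : g b ≤ 0) (hx : x ∈ Icc a b) :
    g x ≤ 0 := by
  have hconv : ConvexOn ℝ (Icc a b) g := by
    refine convexOn_of_hasDerivWithinAt2_nonneg (convex_Icc a b)
      (HasDerivAt.continuousOn fun y _ => hg y) (fun y _ => (hg y).hasDerivWithinAt)
      (fun y _ => (hg' y).hasDerivWithinAt) ?_
    rwa [interior_Icc]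
  have hab := hx.1.trans hx.2
  exact (hconv.le_max_of_mem_Icc (left_mem_Icc.2 hab) (right_mem_Icc.2 hab) hx).trans
    (max_le ha hb)

theorem abs_sub_linearInterpolant_le {f f' f'' : ℝ → ℝ} {a b M x : ℝ} (hab : a < b)
    (hf : ∀ y, HasDerivAt f (f' y) y) (hf' : ∀ y, HasDerivAt f' (f'' y) y)
    (hM : ∀ y ∈ Ioo a b, |f'' y| ≤ M) (hx : x ∈ Icc a b) :
    |f x - linearInterpolant f a b x| ≤ M / 2 * ((x - a) * (b - x)) := by
  set m := (f b - f a) / (b - a)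
  rw [linearInterpolant]
  have hm : m * (b - a) = f b - f a := div_mul_cancel₀ _ (sub_ne_zero.2 hab.ne')
  have key : ∀ σ : ℝ, |σ| = 1 →
      σ * (f x - (f a + m * (x - a))) - M / 2 * ((x - a) * (b - x)) ≤ 0 := by
    intro σ hσ
    refine nonpos_of_hasDerivAt2_nonneg_of_mem_Icc
      (g := fun y => σ * (f y - (f a + m * (y - a))) - M / 2 * ((y - a) * (b - y)))
      (g' := fun y => σ * (f' y - m) - M / 2 * (a + b - 2 * y))
      (g'' := fun y => σ * f'' y + M) (fun y => ?_) (fun y => ?_) (fun y hy => ?_) ?_ ?_ hx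
    · have hlin := ((hasDerivAt_id' y).sub_const a).const_mul m |>.const_add (f a)
      have hquad := ((hasDerivAt_id' y).sub_const a).mul ((hasDerivAt_id' y).const_sub b)
      exact ((((hf y).sub hlin).const_mul σ).sub (hquad.const_mul (M / 2))).congr_deriv (by ring)
    · have hlin := ((hasDerivAt_id' y).const_mul 2).const_sub (a + b)
      exact ((((hf' y).sub_const m).const_mul σ).sub (hlin.const_mul (M / 2))).congr_deriv
        (by ring)
    · have : |σ * f'' y| ≤ M := by rw [abs_mul, hσ, one_mul]; exact hM y hy
      linarith [neg_abs_le (σ * f'' y)]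
    · simp
    · simp [hm]
  rw [abs_le]
  constructor <;> linarith [key 1 (by simp), key (-1) (by simp)]

theorem abs_sub_linearInterpolant_le_sq {f f' f'' : ℝ → ℝ} {a b M x : ℝ} (hab : a < b)
    (hf : ∀ y, HasDerivAt f (f' y) y) (hf' : ∀ y, HasDerivAt f' (f'' y) y)
    (hM : ∀ y ∈ Ioo a b, |f'' y| ≤ M) (hx : x ∈ Icc a b) :
    |f x - linearInterpolant f a b x| ≤ M * (b - a) ^ 2 / 8 := by
  have hM₀ : 0 ≤ M := (abs_nonneg _).trans (hM ((a + b) / 2) ⟨by linarith, by linarith⟩)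
  calc _ ≤ M / 2 * ((x - a) * (b - x)) := abs_sub_linearInterpolant_le hab hf hf' hM hx
    _ ≤ M * (b - a) ^ 2 / 8 := by nlinarith [mul_nonneg hM₀ (sq_nonneg (2 * x - a - b))]

theorem abs_integral_deriv_mul_exp_le {e e' : ℝ → ℝ} {a b κ B : ℝ} (hab : a ≤ b)
    (hκ : 0 ≤ κ) (he : ∀ x, HasDerivAt e (e' x) x) (he' : Continuous e') (ha : e a = 0)
    (hb : e b = 0) (hB : ∀ x ∈ Icc a b, |e x| ≤ B) :
    |∫ x in a..b, e' x * exp (κ * (x - b))| ≤ κ * B * (b - a) := by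
  have hw : ∀ x, HasDerivAt (fun x => exp (κ * (x - b))) (κ * exp (κ * (x - b))) x := by
    intro x
    convert (((hasDerivAt_id' x).sub_const b).const_mul κ).exp using 1
    ring
  have hwc : Continuous fun x => κ * exp (κ * (x - b)) := by fun_prop
  have ibp : ∫ x in a..b, e' x * exp (κ * (x - b)) =
      -∫ x in a..b, e x * (κ * exp (κ * (x - b))) := by
    have := integral_mul_deriv_eq_deriv_mul (fun x _ => he x) (fun x _ => hw x)
      (he'.intervalIntegrable a b) (hwc.intervalIntegrable a b)
    rw [ha, hb] at this
    linarith
  rw [ibp, abs_neg, ← Real.norm_eq_abs, ← abs_of_nonneg (sub_nonneg.2 hab)]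
  refine norm_integral_le_of_norm_le_const fun x hx => ?_
  rw [uIoc_of_le hab] at hx
  have hexp : exp (κ * (x - b)) ≤ 1 :=
    exp_le_one_iff.2 (mul_nonpos_of_nonneg_of_nonpos hκ (by linarith [hx.2]))
  rw [norm_mul, norm_mul, Real.norm_eq_abs, Real.norm_of_nonneg hκ,
    Real.norm_of_nonneg (exp_pos _).le]
  calc |e x| * (κ * exp (κ * (x - b))) ≤ B * (κ * 1) := by
        gcongr
        · exact (abs_nonneg _).trans (hB x ⟨hx.1.le, hx.2⟩)
        · exact hB x ⟨hx.1.le, hx.2⟩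
    _ = κ * B := by ring

theorem first_step_interpolation_error (T α Δt M : ℝ)
    (hα0 : 0 < α) (hα1 : α < 1) (hΔt : 0 < Δt) (hΔtT : Δt ≤ T)
    (h : ℝ → ℝ) (hh : ContDiff ℝ 2 h)
    (hM : ∀ t ∈ Set.Icc (0:ℝ) T, |deriv (deriv h) t| ≤ M) :
    |(1 / (1 - α)) *
        ∫ s in (0:ℝ)..Δt,
          deriv (fun t => h t - (h 0 + (h Δt - h 0) / Δt * t)) s *
            Real.exp (-α * (Δt - s) / (1 - α))| ≤
      α / (8 * (1 - α) ^ 2) * M * Δt ^ 3 := by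
  have h1α : 0 < 1 - α := sub_pos.2 hα1
  set m := (h Δt - h 0) / Δt with hm
  have he : ∀ t, HasDerivAt (fun t => h t - (h 0 + m * t)) (deriv h t - m) t := fun t =>
    ((hh.differentiable two_ne_zero t).hasDerivAt.sub
      (((hasDerivAt_id' t).const_mul m).const_add (h 0))).congr_deriv (by simp)
  have hinterp : ∀ t ∈ Icc 0 Δt, |h t - (h 0 + m * t)| ≤ M * Δt ^ 2 / 8 := fun t ht => by
    simpa [linearInterpolant] using abs_sub_linearInterpolant_le_sq hΔt
      (fun x => (hh.differentiable two_ne_zero x).hasDerivAt)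
      (fun x => (hh.differentiable_deriv_two x).hasDerivAt)
      (fun x hx => hM x ⟨hx.1.le, hx.2.le.trans hΔtT⟩) ht
  have hbound := abs_integral_deriv_mul_exp_le hΔt.le (div_nonneg hα0.le h1α.le) he
    ((hh.continuous_deriv one_le_two).sub continuous_const) (by simp)
    (by rw [hm]; field_simp; ring) hinterp
  have hintegrand : (fun s => deriv (fun t => h t - (h 0 + m * t)) s *
      exp (-α * (Δt - s) / (1 - α))) =
      fun s => (deriv h s - m) * exp (α / (1 - α) * (s - Δt)) := by
    ext s
    rw [(he s).deriv]
    congr 2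
    ring
  rw [hintegrand, abs_mul, abs_of_pos (one_div_pos.2 h1α)]
  calc _ ≤ 1 / (1 - α) * (α / (1 - α) * (M * Δt ^ 2 / 8) * (Δt - 0)) := by gcongr
    _ = α / (8 * (1 - α) ^ 2) * M * Δt ^ 3 := by field_simp; ring
end

section
/- Let h ∈ C²[0,T], 0 < α < 1, nodes t_j = jΔt with N_T Δt = T. Define the L1 approximation F_t^α h^k recursively by F_t^α h^1 = (b_{1,1}/(αΔt))(h(t_1) - h(0)) and F_t^α h^k = exp(-αΔt/(1-α)) F_t^α h^{k-1} + (b_{k,k}/(αΔt))(h(t_k) - h(t_{k-1})), where b_{k,k} = 1 - exp(-αΔt/(1-α)). Then for all 1 ≤ k ≤ N_T, |CFD_t^α h(t_k) - F_t^α h^k| ≤ (αT/(8(1-α)²)) · max_{t∈[0,T]} |h''(t)| · (Δt)². -/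
open Real

/-- Caputo-Fabrizio derivative of order `α`. -/
noncomputable def CFD (α : ℝ) (h : ℝ → ℝ) (t : ℝ) : ℝ :=
  (1 / (1 - α)) * ∫ s in (0:ℝ)..t, deriv h s * Real.exp (-α * (t - s) / (1 - α))

/-!
With `c = α / (1 - α)`, the exponential kernel lets the memory integral be split at `t_{k-1}`:
`CFD(t_k) = e^{-cΔt} CFD(t_{k-1}) + (1-α)⁻¹ ∫_{t_{k-1}}^{t_k} h' w`, the same recursion the scheme
obeys with `h'` replaced by its slope `δ` on the cell. Hence the errors satisfy
`|e_k| ≤ |e_{k-1}| + τ`, and `k τ ≤ (T / Δt) τ` gives the bound once `τ ≤ αMΔt³ / (8(1-α)²)`.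
For `τ`: since `h' - δ` has mean zero on the cell, the weight `w` may be replaced by `w - w(m)`
with `m` the midpoint; then `|h' - δ| ≤ MΔt/2`, `|w - w(m)| ≤ c |s - m|` and `∫ |s - m| = Δt²/4`.
-/

open Set intervalIntegral
open scoped Interval
open MeasureTheory (volume)

theorem integral_abs_sub_of_mem_Icc {a b x : ℝ} (hx : x ∈ Icc a b) :
    ∫ u in a..b, |u - x| = ((x - a) ^ 2 + (b - x) ^ 2) / 2 := by
  have hcont : Continuous fun u : ℝ => |u - x| := by fun_prop
  rw [← integral_add_adjacent_intervals (hcont.intervalIntegrable a x)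
    (hcont.intervalIntegrable x b), integral_of_le hx.1, integral_of_le hx.2,
    ← uIoc_of_ge hx.1, ← uIoc_of_le hx.2]
  have key (y : ℝ) : ∫ u in Ι x y, |u - x| = (y - x) ^ 2 / 2 := by
    simpa [sq_abs, one_add_one_eq_two] using integral_pow_abs_sub_uIoc (a := x) (b := y) (n := 1)
  rw [key, key]
  ring

theorem LipschitzOnWith.abs_sub_slope_le {f f' : ℝ → ℝ} {a b x : ℝ} {K : NNReal}
    (hf' : LipschitzOnWith K f' (Icc a b)) (hab : a < b)
    (hf : ∀ y ∈ Icc a b, HasDerivAt f (f' y) y) (hx : x ∈ Icc a b) :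
    |f' x - (f b - f a) / (b - a)| ≤ K * (b - a) / 2 := by
  have hba : 0 < b - a := sub_pos.2 hab
  have hint : IntervalIntegrable f' volume a b := hf'.continuousOn.intervalIntegrable_of_Icc hab.le
  have hftc : ∫ u in a..b, f' u = f b - f a :=
    integral_eq_sub_of_hasDerivAt (by rwa [uIcc_of_le hab.le]) hint
  have hmean : (b - a) * (f' x - (f b - f a) / (b - a)) = ∫ u in a..b, (f' x - f' u) := by
    rw [integral_sub intervalIntegrable_const hint, hftc, integral_const, smul_eq_mul]
    field_simp
  have hbound : |∫ u in a..b, (f' x - f' u)| ≤ K * (b - a) ^ 2 / 2 :=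
    calc |∫ u in a..b, (f' x - f' u)| ≤ ∫ u in a..b, K * |u - x| := by
          rw [← Real.norm_eq_abs]
          refine norm_integral_le_of_norm_le hab.le (Filter.Eventually.of_forall fun u hu => ?_)
            ((by fun_prop : Continuous fun u => (K : ℝ) * |u - x|).intervalIntegrable a b)
          simpa [Real.dist_eq, abs_sub_comm] using
            hf'.dist_le_mul x hx u (Ioc_subset_Icc_self hu)
      _ = K * (((x - a) ^ 2 + (b - x) ^ 2) / 2) := by
          rw [integral_const_mul, integral_abs_sub_of_mem_Icc hx]
      _ ≤ K * (b - a) ^ 2 / 2 := by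
          rw [mul_div_assoc]
          gcongr
          nlinarith [hx.1, hx.2]
  rw [← mul_le_mul_iff_of_pos_left hba, ← abs_of_pos hba, ← abs_mul, abs_of_pos hba, hmean]
  linarith

theorem abs_integral_mul_sub_slope_mul_integral_le {f f' w : ℝ → ℝ} {a b : ℝ} {K L : NNReal}
    (hab : a < b) (hf : ∀ x ∈ Icc a b, HasDerivAt f (f' x) x)
    (hf' : LipschitzOnWith K f' (Icc a b)) (hw : LipschitzOnWith L w (Icc a b)) :
    |(∫ x in a..b, f' x * w x) - (f b - f a) / (b - a) * ∫ x in a..b, w x|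
      ≤ K * L * (b - a) ^ 3 / 8 := by
  set δ := (f b - f a) / (b - a)
  have hm : (a + b) / 2 ∈ Icc a b := ⟨by linarith, by linarith⟩
  set m := (a + b) / 2
  have hf'i : IntervalIntegrable f' volume a b := hf'.continuousOn.intervalIntegrable_of_Icc hab.le
  have hwi : IntervalIntegrable w volume a b := hw.continuousOn.intervalIntegrable_of_Icc hab.le
  have hf'wi : IntervalIntegrable (fun x => f' x * w x) volume a b :=
    (hf'.continuousOn.mul hw.continuousOn).intervalIntegrable_of_Icc hab.le
  have hmean : ∫ x in a..b, (f' x - δ) = 0 := by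
    rw [integral_sub hf'i intervalIntegrable_const,
      integral_eq_sub_of_hasDerivAt (by rwa [uIcc_of_le hab.le]) hf'i, integral_const, smul_eq_mul]
    simp only [δ]
    field_simp [(sub_pos.2 hab).ne']
    ring
  have hcentre : (∫ x in a..b, f' x * w x) - δ * ∫ x in a..b, w x
      = ∫ x in a..b, (f' x - δ) * (w x - w m) := by
    have hsplit : ∀ x, (f' x - δ) * (w x - w m) = (f' x * w x - δ * w x) - w m * (f' x - δ) := by
      intro x; ring
    simp_rw [hsplit]
    rw [integral_sub (hf'wi.sub (hwi.const_mul δ)) ((hf'i.sub intervalIntegrable_const).const_mul _),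
      integral_sub hf'wi (hwi.const_mul δ), integral_const_mul, integral_const_mul, hmean]
    ring
  rw [hcentre]
  calc |∫ x in a..b, (f' x - δ) * (w x - w m)|
      ≤ ∫ x in a..b, K * (b - a) / 2 * (L * |x - m|) := by
        rw [← Real.norm_eq_abs]
        refine norm_integral_le_of_norm_le hab.le (Filter.Eventually.of_forall fun x hx => ?_)
          ((by fun_prop : Continuous fun x => K * (b - a) / 2 * (L * |x - m|)).intervalIntegrable a b)
        have hx' : x ∈ Icc a b := Ioc_subset_Icc_self hx
        rw [Real.norm_eq_abs, abs_mul]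
        gcongr
        · exact hf'.abs_sub_slope_le hab hf hx'
        · simpa [Real.dist_eq] using hw.dist_le_mul x hx' m hm
    _ = K * L * (b - a) ^ 3 / 8 := by
        rw [integral_const_mul, integral_const_mul, integral_abs_sub_of_mem_Icc hm]
        ring

theorem Convex.lipschitzOnWith_of_abs_deriv_le {f : ℝ → ℝ} {s : Set ℝ} {C : ℝ}
    (hs : Convex ℝ s) (hf : ∀ x ∈ s, DifferentiableAt ℝ f x) (bound : ∀ x ∈ s, |deriv f x| ≤ C) :
    LipschitzOnWith C.toNNReal f s :=
  LipschitzOnWith.of_dist_le' fun x hx y hy => by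
    simpa [Real.dist_eq] using hs.norm_image_sub_le_of_norm_deriv_le hf bound hy hx

theorem hasDerivAt_exp_neg_mul_sub (b c x : ℝ) :
    HasDerivAt (fun s => exp (-c * (b - s))) (exp (-c * (b - x)) * c) x := by
  simpa using (((hasDerivAt_id x).const_sub b).const_mul (-c)).exp

theorem lipschitzOnWith_exp_neg_mul_sub {b c : ℝ} (hc : 0 ≤ c) :
    LipschitzOnWith c.toNNReal (fun s => exp (-c * (b - s))) (Iic b) := by
  refine (convex_Iic b).lipschitzOnWith_of_abs_deriv_le
    (fun s _ => (hasDerivAt_exp_neg_mul_sub b c s).differentiableAt) fun s hs => ?_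
  rw [(hasDerivAt_exp_neg_mul_sub b c s).deriv, abs_of_nonneg (by positivity)]
  exact mul_le_of_le_one_left hc (exp_le_one_iff.2 (by nlinarith [mem_Iic.1 hs]))

theorem integral_exp_neg_mul_sub {a b c : ℝ} (hc : c ≠ 0) :
    ∫ s in a..b, exp (-c * (b - s)) = (1 - exp (-c * (b - a))) / c := by
  have hftc := integral_eq_sub_of_hasDerivAt (fun x _ => hasDerivAt_exp_neg_mul_sub b c x)
    ((by fun_prop : Continuous fun s => exp (-c * (b - s)) * c).intervalIntegrable a b)
  rw [integral_mul_const, sub_self, mul_zero, exp_zero] at hftc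
  rw [eq_div_iff hc, hftc]

theorem abs_integral_mul_exp_neg_mul_sub_le {f f' : ℝ → ℝ} {a b c : ℝ} {K : NNReal}
    (hab : a < b) (hc : 0 < c) (hf : ∀ x ∈ Icc a b, HasDerivAt f (f' x) x)
    (hf' : LipschitzOnWith K f' (Icc a b)) :
    |(∫ s in a..b, f' s * exp (-c * (b - s))) - (1 - exp (-c * (b - a))) / (c * (b - a)) * (f b - f a)|
      ≤ K * c * (b - a) ^ 3 / 8 := by
  have := abs_integral_mul_sub_slope_mul_integral_le hab hf hf'
    ((lipschitzOnWith_exp_neg_mul_sub hc.le).mono Icc_subset_Iic_self)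
  rw [integral_exp_neg_mul_sub hc.ne', coe_toNNReal _ hc.le] at this
  convert this using 3
  field_simp

theorem CFD_zero (α : ℝ) (h : ℝ → ℝ) : CFD α h 0 = 0 := by
  simp [CFD]

theorem CFD_add {α : ℝ} {h : ℝ → ℝ} (hh : Continuous (deriv h)) (t Δ : ℝ) :
    CFD α h (t + Δ) = exp (-α * Δ / (1 - α)) * CFD α h t
      + 1 / (1 - α) * ∫ s in t..t + Δ, deriv h s * exp (-α * (t + Δ - s) / (1 - α)) := by
  have hint (a b : ℝ) : IntervalIntegrable
      (fun s => deriv h s * exp (-α * (t + Δ - s) / (1 - α))) volume a b :=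
    (by fun_prop : Continuous _).intervalIntegrable a b
  have hmemory : ∫ s in (0:ℝ)..t, deriv h s * exp (-α * (t + Δ - s) / (1 - α))
      = exp (-α * Δ / (1 - α)) * ∫ s in (0:ℝ)..t, deriv h s * exp (-α * (t - s) / (1 - α)) := by
    rw [← integral_const_mul]
    refine integral_congr fun s _ => ?_
    rw [mul_left_comm, ← exp_add]
    ring_nf
  rw [CFD, CFD, ← integral_add_adjacent_intervals (hint 0 t) (hint t (t + Δ)), hmemory]
  ring

theorem abs_CFD_add_sub_le {α t Δ : ℝ} {h : ℝ → ℝ} {K : NNReal} (hα0 : 0 < α) (hα1 : α < 1)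
    (hΔ : 0 < Δ) (hd : Differentiable ℝ h) (hd' : Continuous (deriv h))
    (hK : LipschitzOnWith K (deriv h) (Icc t (t + Δ))) :
    |CFD α h (t + Δ) - exp (-α * Δ / (1 - α)) * CFD α h t
        - (1 - exp (-α * Δ / (1 - α))) / (α * Δ) * (h (t + Δ) - h t)|
      ≤ α * K * Δ ^ 3 / (8 * (1 - α) ^ 2) := by
  have h1α : 0 < 1 - α := sub_pos.2 hα1
  have hlocal := abs_integral_mul_exp_neg_mul_sub_le (by linarith : t < t + Δ)
    (div_pos hα0 h1α) (fun x _ => (hd x).hasDerivAt) hK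
  simp_rw [add_sub_cancel_left,
    show ∀ x, -(α / (1 - α)) * x = -α * x / (1 - α) from fun x => by ring] at hlocal
  have hscale : CFD α h (t + Δ) - exp (-α * Δ / (1 - α)) * CFD α h t
        - (1 - exp (-α * Δ / (1 - α))) / (α * Δ) * (h (t + Δ) - h t)
      = 1 / (1 - α) * ((∫ s in t..t + Δ, deriv h s * exp (-α * (t + Δ - s) / (1 - α)))
        - (1 - exp (-α * Δ / (1 - α))) / (α / (1 - α) * Δ) * (h (t + Δ) - h t)) := by
    rw [CFD_add hd']
    field_simp
    ring
  rw [hscale, abs_mul, abs_of_pos (by positivity)]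
  calc 1 / (1 - α) * |_| ≤ 1 / (1 - α) * (K * (α / (1 - α)) * Δ ^ 3 / 8) := by gcongr
    _ = α * K * Δ ^ 3 / (8 * (1 - α) ^ 2) := by field_simp

theorem abs_le_mul_of_abs_sub_mul_le {e : ℕ → ℝ} {E R : ℝ} {n : ℕ} (hE : |E| ≤ 1)
    (h1 : |e 1| ≤ R) (hstep : ∀ k, 1 ≤ k → k < n → |e (k + 1) - E * e k| ≤ R) :
    ∀ k, 1 ≤ k → k ≤ n → |e k| ≤ k * R := by
  intro k hk
  induction k, hk using Nat.le_induction with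
  | base => exact fun _ => by simpa using h1
  | succ k hk ih =>
    intro hkn
    have hcontract : |E * e k| ≤ k * R := by
      rw [abs_mul]
      exact (mul_le_of_le_one_left (abs_nonneg _) hE).trans (ih (by omega))
    push_cast
    linarith [abs_sub_abs_le_abs_sub (e (k + 1)) (E * e k), hstep k hk hkn]

theorem fast_L1_error_general (α T : ℝ) (NT : ℕ)
    (hα0 : 0 < α) (hα1 : α < 1) (hT : 0 < T)
    (Δt : ℝ) (hΔt : Δt = T / NT)
    (h : ℝ → ℝ) (hh : ContDiff ℝ 2 h)
    (M : ℝ) (hM : ∀ t ∈ Set.Icc (0:ℝ) T, |deriv (deriv h) t| ≤ M)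
    (F : ℕ → ℝ)
    (hF1 : F 1 = (1 - Real.exp (-α * Δt / (1 - α))) / (α * Δt) * (h Δt - h 0))
    (hFk : ∀ k : ℕ, 2 ≤ k →
      F k = Real.exp (-α * Δt / (1 - α)) * F (k - 1) +
        (1 - Real.exp (-α * Δt / (1 - α))) / (α * Δt) *
          (h ((k : ℝ) * Δt) - h (((k : ℝ) - 1) * Δt))) :
    ∀ k : ℕ, 1 ≤ k → k ≤ NT →
      |CFD α h ((k : ℝ) * Δt) - F k| ≤
        α * T / (8 * (1 - α) ^ 2) * M * Δt ^ 2 := by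
  intro k hk1 hkNT
  have hNT : (0 : ℝ) < NT := Nat.cast_pos.2 (by omega)
  have hΔ : 0 < Δt := hΔt ▸ div_pos hT hNT
  have hNTΔ : NT * Δt = T := by rw [hΔt]; field_simp
  have hM0 : 0 ≤ M := (abs_nonneg _).trans (hM 0 ⟨le_rfl, hT.le⟩)
  have hLip : LipschitzOnWith M.toNNReal (deriv h) (Icc 0 T) :=
    (convex_Icc 0 T).lipschitzOnWith_of_abs_deriv_le
      (fun x _ => hh.differentiable_deriv_two x) hM
  have hlocal : ∀ j : ℕ, j < NT →
      |CFD α h (j * Δt + Δt) - exp (-α * Δt / (1 - α)) * CFD α h (j * Δt)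
        - (1 - exp (-α * Δt / (1 - α))) / (α * Δt) * (h (j * Δt + Δt) - h (j * Δt))|
      ≤ α * M * Δt ^ 3 / (8 * (1 - α) ^ 2) := by
    intro j hj
    have hjT : (j : ℝ) * Δt + Δt ≤ T := by
      rw [← hNTΔ, ← add_one_mul]
      gcongr
      exact_mod_cast hj
    simpa [coe_toNNReal _ hM0] using abs_CFD_add_sub_le hα0 hα1 hΔ
      (hh.differentiable (by norm_num)) (hh.continuous_deriv (by norm_num))
      (hLip.mono (Icc_subset_Icc (by positivity) hjT))
  refine (abs_le_mul_of_abs_sub_mul_le (e := fun j => CFD α h (j * Δt) - F j)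
    (E := exp (-α * Δt / (1 - α))) (R := α * M * Δt ^ 3 / (8 * (1 - α) ^ 2)) ?_ ?_ ?_
    k hk1 hkNT).trans ?_
  · rw [abs_of_pos (exp_pos _), exp_le_one_iff]
    exact div_nonpos_of_nonpos_of_nonneg (by nlinarith) (by linarith)
  · simpa [hF1, CFD_zero] using hlocal 0 (by omega)
  · intro j hj1 hjn
    rw [hFk (j + 1) (by omega), Nat.add_sub_cancel]
    push_cast
    rw [add_sub_cancel_right, add_one_mul]
    convert hlocal j hjn using 2
    ring
  · calc (k : ℝ) * (α * M * Δt ^ 3 / (8 * (1 - α) ^ 2))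
        ≤ NT * (α * M * Δt ^ 3 / (8 * (1 - α) ^ 2)) := by gcongr
      _ = α * T / (8 * (1 - α) ^ 2) * M * Δt ^ 2 := by rw [← hNTΔ]; ring

theorem fast_L1_error (α T : ℝ) (NT : ℕ) (hNT : 1 ≤ NT)
    (hα0 : 0 < α) (hα1 : α < 1) (hT : 0 < T)
    (Δt : ℝ) (hΔt : Δt = T / NT)
    (h : ℝ → ℝ) (hh : ContDiff ℝ 2 h)
    (M : ℝ) (hM : ∀ t ∈ Set.Icc (0:ℝ) T, |deriv (deriv h) t| ≤ M)
    (F : ℕ → ℝ)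
    (hF1 : F 1 = (1 - Real.exp (-α * Δt / (1 - α))) / (α * Δt) * (h Δt - h 0))
    (hFk : ∀ k : ℕ, 2 ≤ k →
      F k = Real.exp (-α * Δt / (1 - α)) * F (k - 1) +
        (1 - Real.exp (-α * Δt / (1 - α))) / (α * Δt) *
          (h ((k : ℝ) * Δt) - h (((k : ℝ) - 1) * Δt))) :
    ∀ k : ℕ, 1 ≤ k → k ≤ NT →
      |CFD α h ((k : ℝ) * Δt) - F k| ≤
        α * T / (8 * (1 - α) ^ 2) * M * Δt ^ 2 :=
  fast_L1_error_general α T NT hα0 hα1 hT Δt hΔt h hh M hM F hF1 hFk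
end

section
/- Let ζ_{j,k} ∈ (0,1] with ζ_{j,k} increasing in j and ζ_{k,k} = 1, and suppose real nonnegative sequences (a_k) satisfy a_1 ≤ A + B/ζ_{1,1} and a_k ≤ Σ_{j=1}^{k-1}(ζ_{j+1,k} - ζ_{j,k}) a_j + ζ_{1,k} A + B for k ≥ 2, where A, B ≥ 0. Then a_k ≤ A + B/ζ_{1,k} for all k ≥ 1. -/
theorem discrete_stability (ζ : ℕ → ℕ → ℝ) (A B : ℝ) (hA : 0 ≤ A) (hB : 0 ≤ B)
    (hζpos : ∀ j k : ℕ, 1 ≤ j → j ≤ k → 0 < ζ j k ∧ ζ j k ≤ 1)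
    (hζmono : ∀ j k : ℕ, 1 ≤ j → j < k → ζ j k ≤ ζ (j + 1) k)
    (hζkk : ∀ k : ℕ, 1 ≤ k → ζ k k = 1)
    (hζ1 : ∀ j k : ℕ, 1 ≤ j → j ≤ k → ζ 1 k ≤ ζ 1 j)
    (a : ℕ → ℝ) (ha : ∀ k, 0 ≤ a k)
    (ha1 : a 1 ≤ A + B / ζ 1 1)
    (hak : ∀ k : ℕ, 2 ≤ k →
      a k ≤ (∑ j ∈ Finset.Ico 1 k, (ζ (j + 1) k - ζ j k) * a j) + ζ 1 k * A + B) :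
    ∀ k : ℕ, 1 ≤ k → a k ≤ A + B / ζ 1 k := by
  intro k
  induction k using Nat.strong_induction_on with
  | _ k ih =>
    intro hk1
    rcases eq_or_lt_of_le hk1 with h1 | h2
    · rw [← h1]; exact ha1
    · have hk2 : 2 ≤ k := h2
      have hζ1k : 0 < ζ 1 k := (hζpos 1 k le_rfl (by omega)).1
      have hM : (0:ℝ) ≤ A + B / ζ 1 k := by positivity
      have hstep : ∀ j ∈ Finset.Ico 1 k,
          (ζ (j + 1) k - ζ j k) * a j ≤ (ζ (j + 1) k - ζ j k) * (A + B / ζ 1 k) := by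
        intro j hj
        rw [Finset.mem_Ico] at hj
        have hd : 0 ≤ ζ (j + 1) k - ζ j k := sub_nonneg.mpr (hζmono j k hj.1 hj.2)
        have haj : a j ≤ A + B / ζ 1 j := ih j hj.2 hj.1
        have hmono : B / ζ 1 j ≤ B / ζ 1 k :=
          div_le_div_of_nonneg_left hB hζ1k (hζ1 j k hj.1 (le_of_lt hj.2))
        exact mul_le_mul_of_nonneg_left (haj.trans (by linarith)) hd
      have htel : (∑ j ∈ Finset.Ico 1 k, (ζ (j + 1) k - ζ j k)) = 1 - ζ 1 k := by
        have : ∀ n : ℕ, 1 ≤ n → (∑ j ∈ Finset.Ico 1 n, (ζ (j + 1) k - ζ j k)) = ζ n k - ζ 1 k := by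
          intro n hn
          induction n with
          | zero => omega
          | succ m ihm =>
            rcases Nat.lt_or_ge 1 (m + 1) with hm | hm
            · rw [Finset.sum_Ico_succ_top (by omega), ihm (by omega)]; ring
            · have hm0 : m = 0 := by omega
              subst hm0; simp
        rw [this k hk1, hζkk k hk1]
      calc a k ≤ (∑ j ∈ Finset.Ico 1 k, (ζ (j + 1) k - ζ j k) * a j) + ζ 1 k * A + B :=
            hak k hk2
        _ ≤ (∑ j ∈ Finset.Ico 1 k, (ζ (j + 1) k - ζ j k) * (A + B / ζ 1 k)) + ζ 1 k * A + B := by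
            gcongr with j hj
            · rw [Finset.mem_Ico] at hj
              exact sub_nonneg.mpr (hζmono j k hj.1 hj.2)
            · rw [Finset.mem_Ico] at hj
              have haj : a j ≤ A + B / ζ 1 j := ih j hj.2 hj.1
              have hmono : B / ζ 1 j ≤ B / ζ 1 k :=
                div_le_div_of_nonneg_left hB hζ1k (hζ1 j k hj.1 (le_of_lt hj.2))
              linarith
        _ = (1 - ζ 1 k) * (A + B / ζ 1 k) + ζ 1 k * A + B := by
            rw [← Finset.sum_mul, htel]
        _ = A + B / ζ 1 k + (B - ζ 1 k * (B / ζ 1 k)) := by ring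
        _ = A + B / ζ 1 k := by
            rw [mul_div_cancel₀ B (ne_of_gt hζ1k)]; ring
end

section
/- Let ζ_{j,k} satisfy 0 < ζ_{1,k} ≤ ⋯ ≤ ζ_{k,k} = 1 and ζ_{1,j} ≥ ζ_{1,k} for j ≤ k. Suppose nonnegative reals (e_k) satisfy e_1 ≤ C(Δt)² and e_k ≤ Σ_{j=1}^{k-1}(ζ_{j+1,k} - ζ_{j,k}) e_j + C(Δt)² for k ≥ 2, where C ≥ 0. Then e_k ≤ (C/ζ_{1,k})(Δt)² for all k. -/
/-! The weights `ζ (j+1) k - ζ j k` of the recursion are nonnegative and telescope to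
`1 - ζ 1 k`. So if, by strong induction, `e j ≤ D / ζ 1 j ≤ D / ζ 1 k` for all `j < k`,
the recursion gives `e k ≤ (1 - ζ 1 k) · D / ζ 1 k + D = D / ζ 1 k`. -/

open Finset

lemma sum_Ico_sub_mul_le {a e : ℕ → ℝ} {m n : ℕ} {M : ℝ} (hmn : m ≤ n)
    (ha : ∀ j ∈ Ico m n, a j ≤ a (j + 1)) (he : ∀ j ∈ Ico m n, e j ≤ M) :
    ∑ j ∈ Ico m n, (a (j + 1) - a j) * e j ≤ (a n - a m) * M :=
  calc ∑ j ∈ Ico m n, (a (j + 1) - a j) * e j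
      ≤ ∑ j ∈ Ico m n, (a (j + 1) - a j) * M :=
        sum_le_sum fun j hj => mul_le_mul_of_nonneg_left (he j hj) (sub_nonneg.2 (ha j hj))
    _ = (a n - a m) * M := by rw [← sum_mul, sum_Ico_sub a hmn]

lemma one_sub_mul_div_add_self {z : ℝ} (hz : z ≠ 0) (D : ℝ) : (1 - z) * (D / z) + D = D / z := by
  field_simp
  ring

theorem le_div_of_le_sum_increments_mul_add (ζ : ℕ → ℕ → ℝ) (e : ℕ → ℝ) {D : ℝ} (hD : 0 ≤ D)
    (hζpos : ∀ k : ℕ, 1 ≤ k → 0 < ζ 1 k)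
    (hζmono : ∀ j k : ℕ, 1 ≤ j → j < k → ζ j k ≤ ζ (j + 1) k)
    (hζkk : ∀ k : ℕ, 1 ≤ k → ζ k k = 1)
    (hζ1 : ∀ j k : ℕ, 1 ≤ j → j ≤ k → ζ 1 k ≤ ζ 1 j)
    (he1 : e 1 ≤ D)
    (hek : ∀ k : ℕ, 2 ≤ k → e k ≤ (∑ j ∈ Ico 1 k, (ζ (j + 1) k - ζ j k) * e j) + D) :
    ∀ k : ℕ, 1 ≤ k → e k ≤ D / ζ 1 k := by
  intro k
  induction k using Nat.strong_induction_on with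
  | _ k ih =>
    intro hk
    obtain rfl | hk2 := hk.eq_or_lt
    · simpa [hζkk 1 le_rfl] using he1
    have hprev : ∀ j ∈ Ico 1 k, e j ≤ D / ζ 1 k := fun j hj => by
      obtain ⟨hj1, hjk⟩ := mem_Ico.1 hj
      exact (ih j hjk hj1).trans
        (div_le_div_of_nonneg_left hD (hζpos k hk) (hζ1 j k hj1 hjk.le))
    have hsum := sum_Ico_sub_mul_le hk
      (fun j hj => hζmono j k (mem_Ico.1 hj).1 (mem_Ico.1 hj).2) hprev
    calc e k ≤ (ζ k k - ζ 1 k) * (D / ζ 1 k) + D := (hek k hk2).trans (by linarith)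
      _ = D / ζ 1 k := by rw [hζkk k hk, one_sub_mul_div_add_self (hζpos k hk).ne']

theorem discrete_error_bound_general (ζ : ℕ → ℕ → ℝ) (Δt C : ℝ) (hC : 0 ≤ C)
    (hζpos : ∀ j k : ℕ, 1 ≤ j → j ≤ k → 0 < ζ j k ∧ ζ j k ≤ 1)
    (hζmono : ∀ j k : ℕ, 1 ≤ j → j < k → ζ j k ≤ ζ (j + 1) k)
    (hζkk : ∀ k : ℕ, 1 ≤ k → ζ k k = 1)
    (hζ1 : ∀ j k : ℕ, 1 ≤ j → j ≤ k → ζ 1 k ≤ ζ 1 j)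
    (e : ℕ → ℝ)
    (he1 : e 1 ≤ C * Δt ^ 2)
    (hek : ∀ k : ℕ, 2 ≤ k →
      e k ≤ (∑ j ∈ Finset.Ico 1 k, (ζ (j + 1) k - ζ j k) * e j) + C * Δt ^ 2) :
    ∀ k : ℕ, 1 ≤ k → e k ≤ C / ζ 1 k * Δt ^ 2 := by
  intro k hk
  rw [div_mul_eq_mul_div]
  exact le_div_of_le_sum_increments_mul_add ζ e (by positivity)
    (fun k hk => (hζpos 1 k le_rfl hk).1) hζmono hζkk hζ1 he1 hek k hk

theorem discrete_error_bound (ζ : ℕ → ℕ → ℝ) (Δt C : ℝ) (hΔt : 0 < Δt) (hC : 0 ≤ C)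
    (hζpos : ∀ j k : ℕ, 1 ≤ j → j ≤ k → 0 < ζ j k ∧ ζ j k ≤ 1)
    (hζmono : ∀ j k : ℕ, 1 ≤ j → j < k → ζ j k ≤ ζ (j + 1) k)
    (hζkk : ∀ k : ℕ, 1 ≤ k → ζ k k = 1)
    (hζ1 : ∀ j k : ℕ, 1 ≤ j → j ≤ k → ζ 1 k ≤ ζ 1 j)
    (e : ℕ → ℝ) (he : ∀ k, 0 ≤ e k)
    (he1 : e 1 ≤ C * Δt ^ 2)
    (hek : ∀ k : ℕ, 2 ≤ k →
      e k ≤ (∑ j ∈ Finset.Ico 1 k, (ζ (j + 1) k - ζ j k) * e j) + C * Δt ^ 2) :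
    ∀ k : ℕ, 1 ≤ k → e k ≤ C / ζ 1 k * Δt ^ 2 :=
  discrete_error_bound_general ζ Δt C hC hζpos hζmono hζkk hζ1 e he1 hek
end
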